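/- Let A_1 ∈ ℝ^{m×m} and A_2 ∈ ℝ^{n×n} be symmetric positive definite, B ∈ ℝ^{m×n}, and set C = A_1^{-1/2} B A_2^{-1/2}. Let V ∈ ℝ^{n×k} with Vᵀ V = I_k. Then Vᵀ A_2 V is invertible and A_1^{1/2} · (A_1^{-1} B V (Vᵀ A_2 V)^{-1} Vᵀ) · A_2^{1/2} = C · Π, where Π = A_2^{1/2} V (Vᵀ A_2 V)^{-1} Vᵀ A_2^{1/2} is the matrix of the orthogonal projection of ℝⁿ onto col(A_2^{1/2} V). (In words: conjugating the ALS half-step X ↦ A_1^{-1} B V (Vᵀ A_2 V)^{-1} Vᵀ for the Kronecker-product Hessian by A_1^{1/2}, A_2^{1/2} yields the block power half-step Y ↦ C Π for the matrix C.) -/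

import Mathlib

/-!
Put `W = A₂^{1/2} V`. Since `V` has orthonormal columns it is injective, so the Gram matrix
`Vᵀ A₂ V = Wᵀ W` is positive definite, hence invertible, and `Π = W (Wᵀ W)⁻¹ Wᵀ` is the
orthogonal projection onto `col W`: it is symmetric, fixes `W`, and factors through `W`.
The conjugation identity only uses `A₁^{1/2} A₁⁻¹ = A₁^{-1/2}` and `A₂^{-1/2} A₂^{1/2} = 1`.
-/

open Matrix

/-- Column space of a matrix (its range as a linear map). -/
noncomputable def colSpace {m n : ℕ} (X : Matrix (Fin m) (Fin n) ℝ) :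
    Submodule ℝ (EuclideanSpace ℝ (Fin m)) :=
  LinearMap.range (Matrix.toEuclideanLin X)

namespace Matrix

theorem PosDef.transpose_mul_mul_of_transpose_mul_self_eq_one {n k : Type*} [Fintype n]
    [Fintype k] [DecidableEq k] {A : Matrix n n ℝ} (hA : A.PosDef) {V : Matrix n k ℝ}
    (hV : Vᵀ * V = 1) : (Vᵀ * A * V).PosDef := by
  have hinj : Function.Injective V.mulVec :=
    Function.LeftInverse.injective (g := Vᵀ.mulVec) fun x => by rw [mulVec_mulVec, hV, one_mulVec]
  simpa [conjTranspose_eq_transpose_of_trivial] using hA.conjTranspose_mul_mul_same hinj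

variable {m n R : Type*} [Fintype m] [Fintype n] [DecidableEq n] [CommRing R]

/-- `W (Wᵀ W)⁻¹ Wᵀ`: the orthogonal projection onto the column space of `W` when `Wᵀ W` is
invertible. -/
noncomputable def colProj (W : Matrix m n R) : Matrix m m R :=
  W * (Wᵀ * W)⁻¹ * Wᵀ

theorem transpose_colProj (W : Matrix m n R) : (colProj W)ᵀ = colProj W := by
  simp only [colProj, transpose_mul, transpose_transpose, transpose_nonsing_inv, Matrix.mul_assoc]

theorem colProj_mul_self_of_isUnit {W : Matrix m n R} (hW : IsUnit (Wᵀ * W)) :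
    colProj W * W = W := by
  rw [colProj, Matrix.mul_assoc, Matrix.mul_assoc,
    nonsing_inv_mul _ ((isUnit_iff_isUnit_det _).mp hW), Matrix.mul_one]

theorem colProj_mul_colProj {W : Matrix m n R} (hW : IsUnit (Wᵀ * W)) :
    colProj W * colProj W = colProj W :=
  calc colProj W * colProj W = colProj W * W * (Wᵀ * W)⁻¹ * Wᵀ := by
        simp only [colProj, Matrix.mul_assoc]
    _ = colProj W := by rw [colProj_mul_self_of_isUnit hW, colProj]

theorem mul_inv_eq_inv_of_mul_self_eq {S A : Matrix n n R} (hS : IsUnit S) (hSA : S * S = A) :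
    S * A⁻¹ = S⁻¹ := by
  rw [← hSA, mul_inv_rev, mul_nonsing_inv_cancel_left _ _ ((isUnit_iff_isUnit_det _).mp hS)]

end Matrix

theorem colSpace_mul_le {m n p : ℕ} (A : Matrix (Fin m) (Fin n) ℝ) (B : Matrix (Fin n) (Fin p) ℝ) :
    colSpace (A * B) ≤ colSpace A := by
  simpa only [colSpace, toLpLin_mul_same] using LinearMap.range_comp_le_range _ _

theorem colSpace_colProj {m n : ℕ} {W : Matrix (Fin m) (Fin n) ℝ} (hW : IsUnit (Wᵀ * W)) :
    colSpace (colProj W) = colSpace W := by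
  refine le_antisymm ?_ ?_
  · rw [colProj, Matrix.mul_assoc]
    exact colSpace_mul_le _ _
  · conv_lhs => rw [← colProj_mul_self_of_isUnit hW]
    exact colSpace_mul_le _ _

theorem stmt17_general {m n k : ℕ}
    (A₁ R₁ : Matrix (Fin m) (Fin m) ℝ) (A₂ R₂ : Matrix (Fin n) (Fin n) ℝ)
    (hA₁ : A₁.PosDef) (hA₂ : A₂.PosDef)
    (hR₂ : R₂.PosSemidef)
    (hR₁R₁ : R₁ * R₁ = A₁) (hR₂R₂ : R₂ * R₂ = A₂)
    (B C : Matrix (Fin m) (Fin n) ℝ) (hC : C = R₁⁻¹ * B * R₂⁻¹)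
    (V : Matrix (Fin n) (Fin k) ℝ) (hV : Vᵀ * V = 1)
    (Pi2 : Matrix (Fin n) (Fin n) ℝ) (hPi2 : Pi2 = R₂ * V * (Vᵀ * A₂ * V)⁻¹ * Vᵀ * R₂) :
    IsUnit (Vᵀ * A₂ * V) ∧
      R₁ * (A₁⁻¹ * B * V * (Vᵀ * A₂ * V)⁻¹ * Vᵀ) * R₂ = C * Pi2 ∧
      Pi2ᵀ = Pi2 ∧ Pi2 * Pi2 = Pi2 ∧ colSpace Pi2 = colSpace (R₂ * V) := by
  have hR₁u : IsUnit R₁ := isUnit_mul_self_iff.mp (hR₁R₁ ▸ hA₁.isUnit)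
  have hR₂u : IsUnit R₂ := isUnit_mul_self_iff.mp (hR₂R₂ ▸ hA₂.isUnit)
  have hR₂symm : R₂ᵀ = R₂ := by
    simpa [conjTranspose_eq_transpose_of_trivial] using hR₂.isHermitian.eq
  have hGram : Vᵀ * A₂ * V = (R₂ * V)ᵀ * (R₂ * V) := by
    rw [← hR₂R₂, transpose_mul, hR₂symm]
    simp only [Matrix.mul_assoc]
  have hGu : IsUnit (Vᵀ * A₂ * V) := (hA₂.transpose_mul_mul_of_transpose_mul_self_eq_one hV).isUnit
  have hPi : Pi2 = colProj (R₂ * V) := by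
    rw [hPi2, colProj, ← hGram, transpose_mul, hR₂symm]
    simp only [Matrix.mul_assoc]
  refine ⟨hGu, ?_, hPi ▸ transpose_colProj _, hPi ▸ colProj_mul_colProj (hGram ▸ hGu),
    hPi ▸ colSpace_colProj (hGram ▸ hGu)⟩
  rw [hC, hPi2]
  simp only [Matrix.mul_assoc]
  rw [nonsing_inv_mul_cancel_left _ _ ((isUnit_iff_isUnit_det _).mp hR₂u),
    ← Matrix.mul_assoc R₁, mul_inv_eq_inv_of_mul_self_eq hR₁u hR₁R₁]

/-- Conjugating the ALS half-step `X ↦ A₁⁻¹ B V (Vᵀ A₂ V)⁻¹ Vᵀ` for the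
Kronecker-product Hessian by the square roots `R₁ = A₁^{1/2}`, `R₂ = A₂^{1/2}` yields the block
power half-step `Y ↦ C Π` for `C = A₁^{-1/2} B A₂^{-1/2}`, where
`Π = A₂^{1/2} V (Vᵀ A₂ V)⁻¹ Vᵀ A₂^{1/2}` is the orthogonal projection onto `col(A₂^{1/2} V)`. -/
theorem stmt17 {m n k : ℕ}
    (A₁ R₁ : Matrix (Fin m) (Fin m) ℝ) (A₂ R₂ : Matrix (Fin n) (Fin n) ℝ)
    (hA₁ : A₁.PosDef) (hA₂ : A₂.PosDef)
    (hR₁ : R₁.PosSemidef) (hR₂ : R₂.PosSemidef)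
    (hR₁R₁ : R₁ * R₁ = A₁) (hR₂R₂ : R₂ * R₂ = A₂)
    (B C : Matrix (Fin m) (Fin n) ℝ) (hC : C = R₁⁻¹ * B * R₂⁻¹)
    (V : Matrix (Fin n) (Fin k) ℝ) (hV : Vᵀ * V = 1)
    (Pi2 : Matrix (Fin n) (Fin n) ℝ) (hPi2 : Pi2 = R₂ * V * (Vᵀ * A₂ * V)⁻¹ * Vᵀ * R₂) :
    IsUnit (Vᵀ * A₂ * V) ∧
      R₁ * (A₁⁻¹ * B * V * (Vᵀ * A₂ * V)⁻¹ * Vᵀ) * R₂ = C * Pi2 ∧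
      Pi2ᵀ = Pi2 ∧ Pi2 * Pi2 = Pi2 ∧ colSpace Pi2 = colSpace (R₂ * V) :=
  stmt17_general A₁ R₁ A₂ R₂ hA₁ hA₂ hR₂ hR₁R₁ hR₂R₂ B C hC V hV Pi2 hPi2
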